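/- If p : E → B is a disk-hedgehog covering of a path-connected space B, then every small loop α at b₀ ∈ B (a loop homotopable rel b₀ into every neighborhood of b₀) represents the neutral element of the monodromy group π(p,b₀); i.e., every lift of α is a loop. -/

import Mathlib

open unitInterval Topology

set_option linter.unnecessarySimpa false

universe u v w

/-- `p : E → B` is an arc-covering: unique lifting of paths given the initial point. -/
def IsArcCovering {E : Type*} {B : Type*} [TopologicalSpace E] [TopologicalSpace B]
    (p : C(E, B)) : Prop :=
  ∀ (e₀ : E) (f : C(I, B)), f 0 = p e₀ →
    ∃! g : C(I, E), p.comp g = f ∧ g 0 = e₀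

/-- The relation identifying the wedge points of a wedge of copies of `(A, a₀)` indexed by `S`. -/
def wedgeRel (S A : Type*) (a₀ : A) (x y : S × A) : Prop :=
  x = y ∨ (x.2 = a₀ ∧ y.2 = a₀)

/-- The wedge (one-point union) of copies of `(A, a₀)` indexed by `S`. -/
def Wedge (S A : Type*) (a₀ : A) : Type _ :=
  Quot (wedgeRel S A a₀)

/-- The topology of a directed wedge: a set is open iff its trace on each copy of `A`
is open, and if it contains the wedge point then it contains all copies of `A`
beyond some index. -/
instance Wedge.instTopologicalSpace (S A : Type*) (a₀ : A) [Preorder S]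
    [IsDirected S (· ≤ ·)] [TopologicalSpace A] : TopologicalSpace (Wedge S A a₀) where
  IsOpen U := (∀ s : S, IsOpen {a : A | Quot.mk (wedgeRel S A a₀) (s, a) ∈ U}) ∧
    ((∃ s : S, Quot.mk (wedgeRel S A a₀) (s, a₀) ∈ U) →
      ∃ t : S, ∀ s : S, t < s → ∀ a : A, Quot.mk (wedgeRel S A a₀) (s, a) ∈ U)
  isOpen_univ := by
    refine ⟨fun s => ?_, fun h => ?_⟩
    · exact isOpen_univ (X := A)
    · obtain ⟨s, -⟩ := h
      exact ⟨s, fun _ _ _ => trivial⟩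
  isOpen_inter := by
    rintro U V ⟨hU1, hU2⟩ ⟨hV1, hV2⟩
    refine ⟨fun s => (hU1 s).inter (hV1 s), fun h => ?_⟩
    obtain ⟨tU, htU⟩ := hU2 ⟨h.choose, h.choose_spec.1⟩
    obtain ⟨tV, htV⟩ := hV2 ⟨h.choose, h.choose_spec.2⟩
    obtain ⟨t, ht1, ht2⟩ := directed_of (· ≤ ·) tU tV
    exact ⟨t, fun s hs a => ⟨htU s (lt_of_le_of_lt ht1 hs) a, htV s (lt_of_le_of_lt ht2 hs) a⟩⟩
  isOpen_sUnion := by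
    intro C hC
    constructor
    · intro s
      have : {a : A | Quot.mk (wedgeRel S A a₀) (s, a) ∈ ⋃₀ C} =
          ⋃ U ∈ C, {a : A | Quot.mk (wedgeRel S A a₀) (s, a) ∈ U} := by
        ext a
        simp only [Set.mem_setOf_eq, Set.mem_sUnion, Set.mem_iUnion, exists_prop]
        exact Iff.rfl
      rw [this]
      exact isOpen_biUnion fun U hU => (hC U hU).1 s
    · rintro ⟨s, hs⟩
      obtain ⟨U, hUC, hsU⟩ := hs
      obtain ⟨t, ht⟩ := (hC U hUC).2 ⟨s, hsU⟩
      exact ⟨t, fun s' hs' a => ⟨U, hUC, ht s' hs' a⟩⟩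

/-- An arc-hedgehog over a directed set `S`: the directed wedge of copies of `([0,1], 0)`. -/
def ArcHedgehog (S : Type*) : Type _ := Wedge S I 0

instance (S : Type*) [Preorder S] [IsDirected S (· ≤ ·)] : TopologicalSpace (ArcHedgehog S) :=
  Wedge.instTopologicalSpace S I 0

/-- `p` is an arc-hedgehog covering: maps from arc-hedgehogs lift uniquely. -/
def IsArcHedgehogCovering {E : Type*} {B : Type*} [TopologicalSpace E] [TopologicalSpace B]
    (p : C(E, B)) : Prop :=
  ∀ (S : Type u) [Preorder S] [IsDirected S (· ≤ ·)],
    ∀ (e₀ : E) (f : C(ArcHedgehog S, B)) (z₀ : ArcHedgehog S), f z₀ = p e₀ →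
      ∃! g : C(ArcHedgehog S, E), p.comp g = f ∧ g z₀ = e₀

/-- The closed unit `2`-disk. -/
noncomputable def Disk : Type := Metric.closedBall (0 : EuclideanSpace ℝ (Fin 2)) 1

noncomputable instance : TopologicalSpace Disk := by unfold Disk; infer_instance

/-- The center of the disk. -/
noncomputable def Disk.center : Disk := ⟨0, by simp⟩

/-- A disk-hedgehog over a directed set `S`: the directed wedge of copies of the pointed disk. -/
def DiskHedgehog (S : Type*) : Type _ := Wedge S Disk Disk.center

noncomputable instance (S : Type*) [Preorder S] [IsDirected S (· ≤ ·)] : TopologicalSpace (DiskHedgehog S) :=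
  Wedge.instTopologicalSpace S Disk Disk.center

/-- `p` is a disk-hedgehog covering: maps from disk-hedgehogs lift uniquely. -/
def IsDiskHedgehogCovering {E : Type*} {B : Type*} [TopologicalSpace E] [TopologicalSpace B]
    (p : C(E, B)) : Prop :=
  ∀ (S : Type u) [Preorder S] [IsDirected S (· ≤ ·)],
    ∀ (e₀ : E) (f : C(DiskHedgehog S, B)) (z₀ : DiskHedgehog S), f z₀ = p e₀ →
      ∃! g : C(DiskHedgehog S, E), p.comp g = f ∧ g z₀ = e₀

/-- `p` is a disk-covering: maps from the closed `2`-disk lift uniquely. -/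
def IsDiskCovering {E : Type*} {B : Type*} [TopologicalSpace E] [TopologicalSpace B]
    (p : C(E, B)) : Prop :=
  ∀ (e₀ : E) (f : C(Disk, B)) (d₀ : Disk), f d₀ = p e₀ →
    ∃! g : C(Disk, E), p.comp g = f ∧ g d₀ = e₀

/-- Path components of preimages of neighborhoods form a neighborhood basis of the
total space. -/
def HedgehogBasisCondition {E : Type*} {B : Type*} [TopologicalSpace E] [TopologicalSpace B]
    (p : C(E, B)) : Prop :=
  ∀ (e₀ : E) (U : Set E), IsOpen U → e₀ ∈ U →
    ∃ V ∈ 𝓝 (p e₀), {y : E | JoinedIn (p ⁻¹' V) e₀ y} ⊆ U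

/-- The monodromy relation on loops at `b₀`: two loops are identified iff any two of
their lifts starting at the same point end at the same point. -/
def MonodromyRel {E : Type*} {B : Type*} [TopologicalSpace E] [TopologicalSpace B]
    (p : C(E, B)) (b₀ : B) (α β : Path b₀ b₀) : Prop :=
  ∀ g h : C(I, E), (∀ t, p (g t) = α t) → (∀ t, p (h t) = β t) →
    g 0 = h 0 → g 1 = h 1

/-- `p` is regular: for each loop in `B`, all lifts are loops or all lifts are non-loops. -/
def IsRegularCovering {E : Type*} {B : Type*} [TopologicalSpace E] [TopologicalSpace B]
    (p : C(E, B)) : Prop :=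
  ∀ (b : B) (α : Path b b) (g h : C(I, E)),
    (∀ t, p (g t) = α t) → (∀ t, p (h t) = α t) → g 0 = g 1 → h 0 = h 1


/-!
A disk-hedgehog covering lifts disks uniquely, hence squares and paths, so lifts of loops
homotopic rel endpoints have the same endpoints. Choose loops `β_s` homotopic to `α` inside
smaller and smaller neighbourhoods of `b₀` and wedge them together as the radii of a
disk-hedgehog; the small supports make this map continuous at the wedge point. Its lift `G`
starting at `g 0` sends the end of every radius to `g 1`, and these ends converge to the wedge
point, so `g 1` lies in every open set around `g 0`. Then the two-point path from `g 1` to `g 0`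
is continuous and lifts a constant path, so it is constant by unique path lifting.
-/

open Set Filter

section Lifting

variable {E B : Type*} [TopologicalSpace E] [TopologicalSpace B]

def HasUniqueLifting (p : C(E, B)) (X : Type*) [TopologicalSpace X] : Prop :=
  ∀ (e₀ : E) (f : C(X, B)) (x₀ : X), f x₀ = p e₀ →
    ∃! g : C(X, E), p.comp g = f ∧ g x₀ = e₀

namespace HasUniqueLifting

variable {p : C(E, B)} {X Y : Type*} [TopologicalSpace X] [TopologicalSpace Y]

theorem eq_of_comp_eq (hp : HasUniqueLifting p X) {g₁ g₂ : C(X, E)}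
    (hpg : ∀ x, p (g₁ x) = p (g₂ x)) {x₀ : X} (h₀ : g₁ x₀ = g₂ x₀) : g₁ = g₂ :=
  (hp (g₁ x₀) (p.comp g₂) x₀ (hpg x₀).symm).unique ⟨ContinuousMap.ext hpg, rfl⟩ ⟨rfl, h₀.symm⟩

theorem of_leftInverse (hp : HasUniqueLifting p X) (i : C(Y, X)) (r : C(X, Y))
    (hri : Function.LeftInverse r i) : HasUniqueLifting p Y := by
  intro e₀ f y₀ hf
  obtain ⟨G, ⟨hGf, hG₀⟩, hG⟩ := hp e₀ (f.comp r) (i y₀) (by simp [hri y₀, hf])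
  refine ⟨G.comp i, ⟨?_, hG₀⟩, fun g ⟨hgf, hg₀⟩ => ?_⟩
  · ext y
    simpa [hri y] using congr($hGf (i y))
  · have hgr : g.comp r = G :=
      hG _ ⟨by rw [← ContinuousMap.comp_assoc, hgf], by simp [hri y₀, hg₀]⟩
    ext y
    simp [← hgr, hri y]

theorem of_prod_left [Nonempty Y] (hp : HasUniqueLifting p (X × Y)) : HasUniqueLifting p X :=
  hp.of_leftInverse (.prodMk (.id X) (.const X (Classical.arbitrary Y))) .fst fun _ => rfl

theorem eq_of_specializes (hp : HasUniqueLifting p I) {x y : E} (hxy : x ⤳ y)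
    (hpxy : p x = p y) : x = y := by
  obtain ⟨γ, hγ⟩ := hxy.joinedIn (F := p ⁻¹' {p y}) hpxy rfl
  have hγx : γ.toContinuousMap = .const I x :=
    hp.eq_of_comp_eq (fun t => (hγ t).trans hpxy.symm) (x₀ := 0) γ.source
  simpa using congr($hγx 1).symm

theorem exists_lift_of_homotopy (hp : HasUniqueLifting p (I × I)) {x y : B} {α β : Path x y}
    (H : α.Homotopy β) {g : C(I, E)} (hg : ∀ t, p (g t) = α t) :
    ∃ h : C(I, E), (∀ t, p (h t) = β t) ∧ h 0 = g 0 ∧ h 1 = g 1 := by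
  have hI := hp.of_prod_left
  obtain ⟨G, ⟨hGH, hG₀⟩, -⟩ := hp (g 0) H.toContinuousMap (0, 0) (by simp [hg 0])
  have hpG (z : I × I) : p (G z) = H z := congr($hGH z)
  have hα : G.curry 0 = g := hI.eq_of_comp_eq (fun t => by simp [hpG, hg]) (x₀ := 0) hG₀
  have hside {v : I} (hv : ∀ t, H (t, v) = H (0, v)) :
      (G.comp .prodSwap).curry v = .const I (G (0, v)) :=
    hI.eq_of_comp_eq (fun t => by simp [hpG, hv]) (x₀ := 0) rfl
  refine ⟨G.curry 1, fun t => by simp [hpG], ?_, ?_⟩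
  · simpa [hG₀] using congr($(hside (v := 0) (by simp)) 1)
  · simpa [← congr($hα 1)] using congr($(hside (v := 1) (by simp)) 1)

end HasUniqueLifting

end Lifting

namespace Disk

-- Halving keeps the square inside the unit disk and puts the corner `(0, 0)` at the center.
noncomputable def ofSquare : C(I × I, Disk) :=
  ⟨fun x => ⟨!₂[(x.1 : ℝ) / 2, (x.2 : ℝ) / 2], by
    rw [Metric.mem_closedBall, dist_zero_right, EuclideanSpace.norm_eq, Fin.sum_univ_two,
      Real.sqrt_le_one]
    simp only [Matrix.cons_val_zero, Matrix.cons_val_one, Matrix.cons_val_fin_one,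
      Real.norm_eq_abs, sq_abs]
    nlinarith [x.1.2.1, x.1.2.2, x.2.2.1, x.2.2.2]⟩, by fun_prop⟩

noncomputable def toSquare : C(Disk, I × I) :=
  ⟨fun d => (projIcc 0 1 zero_le_one (2 * d.1 0), projIcc 0 1 zero_le_one (2 * d.1 1)),
    by fun_prop⟩

theorem coe_ofSquare (x : I × I) :
    (ofSquare x).1 = !₂[(x.1 : ℝ) / 2, (x.2 : ℝ) / 2] :=
  rfl

@[simp]
theorem toSquare_ofSquare (x : I × I) : toSquare (ofSquare x) = x := by
  simp [toSquare, coe_ofSquare, mul_div_cancel₀]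

theorem ofSquare_zero : ofSquare (0, 0) = center := by
  apply Subtype.ext
  ext i
  fin_cases i <;> simp [coe_ofSquare, center]

end Disk

namespace Wedge

variable {S A X : Type*} [Preorder S] [IsDirected S (· ≤ ·)] [TopologicalSpace A]
  [TopologicalSpace X] {a₀ : A}

def incl (a₀ : A) (s : S) : C(A, Wedge S A a₀) :=
  ⟨fun a => Quot.mk _ (s, a), continuous_def.2 fun _ hU => hU.1 s⟩

theorem incl_base (s t : S) : incl a₀ s a₀ = incl a₀ t a₀ :=
  Quot.sound (.inr ⟨rfl, rfl⟩)

def lift (f : S → C(A, X)) (x₀ : X) (hf₀ : ∀ s, f s a₀ = x₀)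
    (hf : ∀ W ∈ 𝓝 x₀, ∃ t, ∀ s, t < s → ∀ a, f s a ∈ W) : C(Wedge S A a₀, X) where
  toFun := Quot.lift (fun x => f x.1 x.2) <| by
    rintro x y (rfl | ⟨hx, hy⟩)
    · rfl
    · simp [hx, hy, hf₀]
  continuous_toFun := continuous_def.2 fun W hW =>
    ⟨fun s => (f s).continuous.isOpen_preimage W hW, fun ⟨s, hs⟩ =>
      hf W (hW.mem_nhds (hf₀ s ▸ hs))⟩

theorem tendsto_incl_atTop [NoMaxOrder S] (a : S → A) (s₀ : S) :
    Tendsto (fun s => incl a₀ s (a s)) atTop (𝓝 (incl a₀ s₀ a₀)) := by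
  refine tendsto_nhds.2 fun U hU hbase => ?_
  obtain ⟨t, ht⟩ := hU.2 ⟨s₀, hbase⟩
  obtain ⟨t', htt'⟩ := exists_gt t
  exact mem_of_superset (mem_atTop t') fun s hs => ht s (htt'.trans_le hs) (a s)

end Wedge

namespace IsDiskHedgehogCovering

variable {E B : Type*} [TopologicalSpace E] [TopologicalSpace B] {p : C(E, B)}

theorem hasUniqueLifting_wedge (hp : IsDiskHedgehogCovering.{u} p) (S : Type u) [Preorder S]
    [IsDirected S (· ≤ ·)] : HasUniqueLifting p (Wedge S Disk Disk.center) :=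
  hp S

theorem hasUniqueLifting_disk (hp : IsDiskHedgehogCovering.{u} p) : HasUniqueLifting p Disk :=
  (hp.hasUniqueLifting_wedge PUnit.{u + 1}).of_leftInverse (Wedge.incl Disk.center PUnit.unit)
    (Wedge.lift (fun _ => .id Disk) Disk.center (fun _ => rfl)
      fun _ _ => ⟨PUnit.unit, fun _ h => (h.ne rfl).elim⟩) fun _ => rfl

theorem lift_isLoop_of_shrinking_homotopic (hp : IsDiskHedgehogCovering.{u} p)
    {S : Type u} [SemilatticeSup S] [NoMaxOrder S] [Nonempty S] {b₀ : B} {α : Path b₀ b₀}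
    (β : S → Path b₀ b₀) (hβ : ∀ W ∈ 𝓝 b₀, ∃ t, ∀ s, t < s → ∀ x, β s x ∈ W)
    (hαβ : ∀ s, α.Homotopic (β s)) {g : C(I, E)} (hg : ∀ t, p (g t) = α t) : g 0 = g 1 := by
  have hsq : HasUniqueLifting p (I × I) :=
    hp.hasUniqueLifting_disk.of_leftInverse Disk.ofSquare Disk.toSquare Disk.toSquare_ofSquare
  have hI := hsq.of_prod_left
  choose h hhβ hh₀ hh₁ using fun s => hsq.exists_lift_of_homotopy (hαβ s).some hg
  have hr₀ : Disk.toSquare Disk.center = (0, 0) := by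
    rw [← Disk.ofSquare_zero, Disk.toSquare_ofSquare]
  let F : C(Wedge S Disk Disk.center, B) :=
    Wedge.lift (fun s => (β s).toContinuousMap.comp (.comp .fst Disk.toSquare)) b₀
      (fun s => by simp [hr₀]) fun W hW => (hβ W hW).imp fun _ ht s hs _ => ht s hs _
  have hF (s : S) (d : Disk) : F (Wedge.incl _ s d) = β s (Disk.toSquare d).1 := rfl
  let s₀ : S := Classical.arbitrary S
  obtain ⟨G, ⟨hGF, hG₀⟩, -⟩ :=
    hp.hasUniqueLifting_wedge S (g 0) F (Wedge.incl _ s₀ Disk.center) (by simp [hF, hr₀, hg 0])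
  have hpG (z : Wedge S Disk Disk.center) : p (G z) = F z := congr($hGF z)
  -- `F` runs along the radius `t ↦ ofSquare (t, 0)` of copy `s` as `β s` does.
  have hend (s : S) : G (Wedge.incl _ s (Disk.ofSquare (1, 0))) = g 1 := by
    let radius : C(I, E) := ⟨fun t => G (Wedge.incl _ s (Disk.ofSquare (t, 0))), by fun_prop⟩
    have : radius = h s := hI.eq_of_comp_eq (x₀ := 0)
      (fun t => by simp [radius, hhβ, hF, hpG])
      (by simp [radius, hh₀, Disk.ofSquare_zero, Wedge.incl_base _ s₀, hG₀])
    simpa [radius, hh₁] using congr($this 1)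
  have hspec : g 1 ⤳ g 0 := by
    have := (G.continuous.tendsto _).comp
      (Wedge.tendsto_incl_atTop (fun _ => Disk.ofSquare (1, 0)) s₀)
    simp only [Function.comp_def, hend, hG₀] at this
    exact specializes_iff_forall_open.2 fun U hU hU₀ =>
      eventually_const.1 (this.eventually_mem (hU.mem_nhds hU₀))
  exact (hI.eq_of_specializes hspec (by rw [hg, hg, α.source, α.target])).symm

end IsDiskHedgehogCovering

instance {α β : Type*} [Preorder α] [Preorder β] [NoMaxOrder β] : NoMaxOrder (α × β) :=
  ⟨fun a => let ⟨b, hb⟩ := exists_gt a.2; ⟨(a.1, b), Prod.mk_lt_mk_of_le_of_lt le_rfl hb⟩⟩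

instance {X : Type*} [TopologicalSpace X] (x : X) : SemilatticeInf {V : Set X // V ∈ 𝓝 x} :=
  Subtype.semilatticeInf fun _ _ => inter_mem

theorem small_loops_trivial_general {E B : Type u} [TopologicalSpace E] [TopologicalSpace B]
    (p : C(E, B)) (hp : IsDiskHedgehogCovering.{u} p) (b₀ : B) (α : Path b₀ b₀)
    (hsmall : ∀ U ∈ nhds b₀, ∃ β : Path b₀ b₀, (∀ t, β t ∈ U) ∧ α.Homotopic β) :
    ∀ g : C(I, E), (∀ t, p (g t) = α t) → g 0 = g 1 := by
  intro g hg
  -- The factor `ℕ` provides strictly larger indices, which the wedge topology is phrased with.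
  choose β hβ hαβ using fun s : {V : Set B // V ∈ 𝓝 b₀}ᵒᵈ × ℕ =>
    hsmall _ (OrderDual.ofDual s.1).2
  refine hp.lift_isLoop_of_shrinking_homotopic β (fun W hW => ?_) hαβ hg
  exact ⟨(OrderDual.toDual ⟨W, hW⟩, 0), fun s hs t => hs.le.1 (hβ s t)⟩

/-- every small loop at `b₀` represents the neutral element of the
monodromy group of any disk-hedgehog covering: all its lifts are loops. -/
theorem small_loops_trivial {E B : Type u} [TopologicalSpace E] [TopologicalSpace B]
    [PathConnectedSpace B]
    (p : C(E, B)) (hp : IsDiskHedgehogCovering.{u} p) (b₀ : B) (α : Path b₀ b₀)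
    (hsmall : ∀ U ∈ nhds b₀, ∃ β : Path b₀ b₀, (∀ t, β t ∈ U) ∧ α.Homotopic β) :
    ∀ g : C(I, E), (∀ t, p (g t) = α t) → g 0 = g 1 :=
  small_loops_trivial_general p hp b₀ α hsmall
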